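/- arXiv:2006.14298 — 3 statements merged into one kernel-verified Lean document; each statement's English description precedes it below -/
import Mathlib

section
/- If a point on the offset circle of a weighted site lies strictly inside the offset circle of a higher-weighted site at time t, then it lies strictly inside that offset circle at every later time t' ≥ t. Formally: let s_i, s_j ∈ ℝ² with weights 0 < w_i ≤ w_j, let p(t) := s_i + t·w_i·u for a fixed unit vector u. If dist(p(t), s_j) < t·w_j for some t ≥ 0, then dist(p(t'), s_j) < t'·w_j for all t' ≥ t. -/
/-! The moving point travels at speed `w_i` while the offset circle of `s_j` grows at the
no smaller speed `w_j`, so by the triangle inequality `t ↦ dist (p t) s_j - t * w_j` is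
antitone; it is negative at `t`, hence at every later time. -/

theorem dist_add_smul_add_smul {E : Type*} [SeminormedAddCommGroup E] [NormedSpace ℝ E]
    (a u : E) (c d : ℝ) : dist (a + c • u) (a + d • u) = |c - d| * ‖u‖ := by
  rw [dist_add_left, dist_eq_norm, ← sub_smul, norm_smul, Real.norm_eq_abs]

theorem antitone_dist_add_smul_sub_mul {E : Type*} [SeminormedAddCommGroup E] [NormedSpace ℝ E]
    (a b u : E) {w w' : ℝ} (hw : 0 ≤ w) (hspeed : w * ‖u‖ ≤ w') :
    Antitone fun t : ℝ => dist (a + (t * w) • u) b - t * w' := by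
  intro t t' htt'
  have hstep : dist (a + (t' * w) • u) (a + (t * w) • u) = (t' - t) * (w * ‖u‖) := by
    rw [dist_add_smul_add_smul, ← sub_mul, abs_of_nonneg (mul_nonneg (sub_nonneg.2 htt') hw),
      mul_assoc]
  have hgrowth : (t' - t) * (w * ‖u‖) ≤ (t' - t) * w' :=
    mul_le_mul_of_nonneg_left hspeed (sub_nonneg.2 htt')
  have := dist_triangle (a + (t' * w) • u) (a + (t * w) • u) b
  dsimp only
  linarith

theorem inactive_stays_inactive_general
    (s_i s_j : EuclideanSpace ℝ (Fin 2)) (w_i w_j : ℝ)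
    (hwi : 0 < w_i) (hij : w_i ≤ w_j)
    (u : EuclideanSpace ℝ (Fin 2)) (hu : ‖u‖ = 1)
    (t : ℝ)
    (h : dist (s_i + (t * w_i) • u) s_j < t * w_j) :
    ∀ t' ≥ t, dist (s_i + (t' * w_i) • u) s_j < t' * w_j := by
  intro t' ht'
  have hspeed : w_i * ‖u‖ ≤ w_j := by rwa [hu, mul_one]
  have hmono := antitone_dist_add_smul_sub_mul s_i s_j u hwi.le hspeed ht'
  dsimp only at hmono
  linarith

/-- An inactive point stays inactive: if the point of fixed polar angle on the
offset circle of `s_i` lies strictly inside the offset circle of a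
higher-weighted site `s_j` at time `t`, then it does so for all `t' ≥ t`. -/
theorem inactive_stays_inactive
    (s_i s_j : EuclideanSpace ℝ (Fin 2)) (w_i w_j : ℝ)
    (hwi : 0 < w_i) (hij : w_i ≤ w_j)
    (u : EuclideanSpace ℝ (Fin 2)) (hu : ‖u‖ = 1)
    (t : ℝ) (ht : 0 ≤ t)
    (h : dist (s_i + (t * w_i) • u) s_j < t * w_j) :
    ∀ t' ≥ t, dist (s_i + (t' * w_i) • u) s_j < t' * w_j :=
  inactive_stays_inactive_general s_i s_j w_i w_j hwi hij u hu t h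
end

section
/- Let S be a set of n point sites on the real line ℝ with positive weights. Then the multiplicatively weighted Voronoi diagram of S in one dimension, viewed as the set of points equidistant (in weighted distance) to two or more sites achieving the minimum, partitions ℝ into at most 2n − 1 maximal intervals on which the weighted nearest neighbor is a single fixed site. -/
open List

lemma first_occ_split {α : Type*} {a : α} : ∀ {l : List α}, a ∈ l →
    ∃ u v, l = u ++ a :: v ∧ a ∉ u := by
  intro l hl
  induction l with
  | nil => simp at hl
  | cons b t ih =>
    by_cases hba : b = a
    · exact ⟨[], t, by simp [hba], by simp⟩
    · have hat : a ∈ t := by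
        rcases mem_cons.mp hl with h | h
        · exact absurd h.symm hba
        · exact h
      obtain ⟨u, v, huv, hnotin⟩ := ih hat
      refine ⟨b :: u, v, by simp [huv], ?_⟩
      simp only [mem_cons, not_or]
      exact ⟨fun h => hba h.symm, hnotin⟩

lemma ends_with_of_eq {α : Type*} {l r u v : List α} {a : α}
    (h1 : l = r ++ [a]) (h2 : l = u ++ a :: v) (hv : v ≠ []) :
    ∃ v₀, v = v₀ ++ [a] := by
  rcases v.eq_nil_or_concat with rfl | ⟨v₀, c, rfl⟩
  · exact absurd rfl hv
  · have h3 : (u ++ a :: v₀) ++ [c] = r ++ [a] := by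
      rw [← h1, h2]; simp
    have h4 := (List.append_inj' h3 rfl).2
    simp only [cons.injEq] at h4
    exact ⟨v₀, by simp [List.concat_eq_append, h4.1]⟩

/-- Davenport–Schinzel order 2: a sequence with no two equal adjacent elements and
no `abab` alternation has length at most `2·|alphabet| - 1`. -/
lemma ds2 {α : Type*} [DecidableEq α] :
    ∀ (N : ℕ) (l : List α) (A : Finset α), l.length ≤ N →
    (∀ x ∈ l, x ∈ A) → l.Chain' (· ≠ ·) →
    (∀ a b : α, a ≠ b → ¬ ([a, b, a, b] <+ l)) →
    l.length ≤ 2 * A.card - 1 := by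
  intro N
  induction N with
  | zero =>
    intro l A hlen _ _ _
    omega
  | succ N ih =>
    intro l A hlen hmem hchain habab
    rcases l.eq_nil_or_concat with rfl | ⟨r, a, hl'⟩
    · simp
    · have hl : l = r ++ [a] := by simpa [List.concat_eq_append] using hl'
      have haL : a ∈ l := by rw [hl]; simp
      obtain ⟨u, v, hluv, hau⟩ := first_occ_split haL
      have hchain_u : u.Chain' (· ≠ ·) := by
        rw [hluv] at hchain; exact (isChain_append.mp hchain).1
      have hchain_av : (a :: v).Chain' (· ≠ ·) := by
        rw [hluv] at hchain; exact (isChain_append.mp hchain).2.1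
      rcases eq_or_ne u [] with rfl | hune
      · -- l = a :: v
        simp only [nil_append] at hluv
        rcases eq_or_ne v [] with rfl | hvne
        · -- l = [a]
          have : A.Nonempty := ⟨a, hmem a haL⟩
          have := Finset.card_pos.mpr this
          rw [hluv]; simp; omega
        · obtain ⟨v₀, hv₀⟩ := ends_with_of_eq hl (show l = [] ++ a :: v by simpa using hluv) hvne
          have hav : a ∈ v := by rw [hv₀]; simp
          obtain ⟨ww, v', hv, haw⟩ := first_occ_split hav
          -- l = a :: ww ++ a :: v'
          have hwne : ww ≠ [] := by
            rintro rfl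
            rw [hluv, hv] at hchain
            simp only [nil_append] at hchain
            exact (isChain_cons_cons.mp hchain).1 rfl
          set A1 := ww.toFinset with hA1
          set A2 := (a :: v').toFinset with hA2
          have hdisj : Disjoint A1 A2 := by
            rw [Finset.disjoint_left]
            intro b hb1 hb2
            have hbw : b ∈ ww := by simpa [hA1] using hb1
            have hba : b ≠ a := fun h => haw (h ▸ hbw)
            have hbv' : b ∈ v' := by
              rcases mem_cons.mp (by simpa [hA2] using hb2) with h | h
              · exact absurd h hba
              · exact h
            apply habab a b (fun h => hba h.symm)
            have hsub : ([a] ++ [b] ++ [a]) ++ [b] <+ ([a] ++ ww ++ [a]) ++ v' := by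
              refine Sublist.append (Sublist.append (Sublist.append ?_ ?_) ?_) ?_
              · exact Sublist.refl _
              · exact singleton_sublist.mpr hbw
              · exact Sublist.refl _
              · exact singleton_sublist.mpr hbv'
            have hshape : l = ([a] ++ ww ++ [a]) ++ v' := by rw [hluv, hv]; simp
            rw [hshape]
            simpa using hsub
          have hsubA : A1 ∪ A2 ⊆ A := by
            intro x hx
            rcases Finset.mem_union.mp hx with h | h
            · exact hmem x (by rw [hluv, hv]; simp [mem_toFinset.mp h])
            · rcases mem_cons.mp (mem_toFinset.mp h) with h | h
              · exact hmem x (h ▸ haL)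
              · exact hmem x (by rw [hluv, hv]; simp [h])
          have htail : (ww ++ a :: v').Chain' (· ≠ ·) := by
            have := hchain_av.tail
            exact (show (ww ++ a :: v').IsChain (· ≠ ·) by simpa [hv] using this)
          have hcw : ww.Chain' (· ≠ ·) := ((isChain_append).mp htail).1
          have hcav' : (a :: v').Chain' (· ≠ ·) := ((isChain_append).mp htail).2.1
          have hsw : ww <+ l := by
            rw [hluv, hv]
            exact ((sublist_append_left ww (a :: v')).trans (sublist_cons_self a _))
          have hsav' : (a :: v') <+ l := by
            rw [hluv, hv]
            exact ((sublist_append_right ww (a :: v')).trans (sublist_cons_self a _))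
          have hlen' : l.length = 1 + ww.length + (a :: v').length := by
            rw [hluv, hv]; simp; omega
          have hwpos : 1 ≤ ww.length := length_pos_iff.mpr hwne
          have h1 := ih ww A1 (by omega) (fun x hx => by simp [hA1, hx]) hcw
            (fun x y hxy hsub => habab x y hxy (hsub.trans hsw))
          have h2 := ih (a :: v') A2 (by omega)
            (fun x hx => by rw [hA2]; simpa using hx) hcav'
            (fun x y hxy hsub => habab x y hxy (hsub.trans hsav'))
          have hcard : A1.card + A2.card = (A1 ∪ A2).card :=
            (Finset.card_union_of_disjoint hdisj).symm
          have hAle : (A1 ∪ A2).card ≤ A.card := Finset.card_le_card hsubA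
          have hA1pos : 0 < A1.card := by
            rcases exists_mem_of_ne_nil ww hwne with ⟨x, hx⟩
            exact Finset.card_pos.mpr ⟨x, by simp [hA1, hx]⟩
          have hA2pos : 0 < A2.card := Finset.card_pos.mpr ⟨a, by simp [hA2]⟩
          omega
      · -- u nonempty
        set A1 := u.toFinset with hA1
        set A2 := (a :: v).toFinset with hA2
        have hdisj : Disjoint A1 A2 := by
          rw [Finset.disjoint_left]
          intro b hb1 hb2
          have hbu : b ∈ u := by simpa [hA1] using hb1
          have hba : b ≠ a := fun h => hau (h ▸ hbu)
          have hbv : b ∈ v := by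
            rcases mem_cons.mp (by simpa [hA2] using hb2) with h | h
            · exact absurd h hba
            · exact h
          have hvne : v ≠ [] := ne_nil_of_mem hbv
          obtain ⟨v₀, hv₀⟩ := ends_with_of_eq hl hluv hvne
          have hbv₀ : b ∈ v₀ := by
            rcases mem_append.mp (by rw [← hv₀]; exact hbv) with h | h
            · exact h
            · simp at h; exact absurd h hba
          apply habab b a hba
          have hsub : ([b] ++ [a] ++ [b]) ++ [a] <+ (u ++ [a] ++ v₀) ++ [a] := by
            refine Sublist.append (Sublist.append (Sublist.append ?_ ?_) ?_) ?_
            · exact singleton_sublist.mpr hbu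
            · exact Sublist.refl _
            · exact singleton_sublist.mpr hbv₀
            · exact Sublist.refl _
          have hshape : l = (u ++ [a] ++ v₀) ++ [a] := by rw [hluv, hv₀]; simp
          rw [hshape]
          simpa using hsub
        have hsubA : A1 ∪ A2 ⊆ A := by
          intro x hx
          rcases Finset.mem_union.mp hx with h | h
          · exact hmem x (by rw [hluv]; simp [mem_toFinset.mp h])
          · rcases mem_cons.mp (mem_toFinset.mp h) with h | h
            · exact hmem x (h ▸ haL)
            · exact hmem x (by rw [hluv]; simp [h])
        have hsu : u <+ l := by rw [hluv]; exact sublist_append_left _ _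
        have hsav : (a :: v) <+ l := by rw [hluv]; exact sublist_append_right _ _
        have hlen' : l.length = u.length + (a :: v).length := by rw [hluv]; simp
        have hupos : 1 ≤ u.length := length_pos_iff.mpr hune
        have hl2 : (a :: v).length = v.length + 1 := by simp
        have h1 := ih u A1 (by omega) (fun x hx => by simp [hA1, hx]) hchain_u
          (fun x y hxy hsub => habab x y hxy (hsub.trans hsu))
        have h2 := ih (a :: v) A2 (by omega)
          (fun x hx => by rw [hA2]; simpa using hx) hchain_av
          (fun x y hxy hsub => habab x y hxy (hsub.trans hsav))
        have hcard : A1.card + A2.card = (A1 ∪ A2).card :=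
          (Finset.card_union_of_disjoint hdisj).symm
        have hAle : (A1 ∪ A2).card ≤ A.card := Finset.card_le_card hsubA
        have hA1pos : 0 < A1.card := by
          rcases exists_mem_of_ne_nil u hune with ⟨x, hx⟩
          exact Finset.card_pos.mpr ⟨x, by simp [hA1, hx]⟩
        have hA2pos : 0 < A2.card := Finset.card_pos.mpr ⟨a, by simp [hA2]⟩
        omega

/- ### Auxiliary definitions -/

/-- Weighted distance from `x` to site `k`. -/
noncomputable def gf {n : ℕ} (s w : Fin n → ℝ) (k : Fin n) (x : ℝ) : ℝ := |x - s k| / w k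

lemma gf_cont {n : ℕ} (s w : Fin n → ℝ) (k : Fin n) : Continuous (gf s w k) := by
  unfold gf
  exact (continuous_abs.comp (continuous_id.sub continuous_const)).div_const _

lemma gf_nonneg {n : ℕ} (s w : Fin n → ℝ) (hw : ∀ i, 0 < w i) (k : Fin n) (x : ℝ) :
    0 ≤ gf s w k x := div_nonneg (abs_nonneg _) (hw k).le

/- ### Bisector algebra (see earlier file sections) -/

lemma bis_subset {a b u v : ℝ} (hu : 0 < u) (hv : 0 < v) (hab : a ≠ b) :
    {x : ℝ | |x - a| / u = |x - b| / v} ⊆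
      {(v * a - u * b) / (v - u), (v * a + u * b) / (v + u)} := by
  intro x hx
  simp only [Set.mem_setOf_eq] at hx
  have h1 : |x - a| * v = |x - b| * u := (div_eq_div_iff (ne_of_gt hu) (ne_of_gt hv)).mp hx
  have h2 : |v * (x - a)| = |u * (x - b)| := by
    rw [abs_mul, abs_mul, abs_of_pos hv, abs_of_pos hu]
    linarith
  rcases abs_eq_abs.mp h2 with h | h
  · have h3 : (v - u) * x = v * a - u * b := by ring_nf; ring_nf at h; linarith
    rcases eq_or_ne v u with rfl | hvu
    · exfalso
      have : v * (a - b) = 0 := by linarith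
      rcases mul_eq_zero.mp this with h' | h'
      · linarith
      · exact hab (by linarith)
    · left
      rw [eq_div_iff (sub_ne_zero.mpr hvu)]
      linarith [h3]
  · have h3 : (v + u) * x = v * a + u * b := by ring_nf; ring_nf at h; linarith
    right
    simp only [Set.mem_singleton_iff]
    rw [eq_div_iff (by positivity : v + u ≠ 0)]
    linarith [h3]

lemma three_in_pair {p q z1 z2 z3 : ℝ} (h1 : z1 = p ∨ z1 = q) (h2 : z2 = p ∨ z2 = q)
    (h3 : z3 = p ∨ z3 = q) (h12 : z1 ≠ z2) (h13 : z1 ≠ z3) (h23 : z2 ≠ z3) : False := by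
  rcases h1 with rfl | rfl <;> rcases h2 with rfl | rfl <;> rcases h3 with rfl | rfl <;>
    simp_all

lemma pair_finite {n : ℕ} {s w : Fin n → ℝ} (hs : Function.Injective s)
    (hw : ∀ i, 0 < w i) {i j : Fin n} (hij : i ≠ j) :
    {x : ℝ | gf s w i x = gf s w j x}.Finite := by
  apply Set.Finite.subset (Set.Finite.insert _ (Set.finite_singleton _))
  exact bis_subset (hw i) (hw j) (fun h => hij (hs h))

lemma pair_no_three {n : ℕ} {s w : Fin n → ℝ} (hs : Function.Injective s)
    (hw : ∀ i, 0 < w i) {i j : Fin n} (hij : i ≠ j) {z1 z2 z3 : ℝ}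
    (h1 : gf s w i z1 = gf s w j z1) (h2 : gf s w i z2 = gf s w j z2)
    (h3 : gf s w i z3 = gf s w j z3)
    (d12 : z1 ≠ z2) (d13 : z1 ≠ z3) (d23 : z2 ≠ z3) : False := by
  have hsub := bis_subset (hw i) (hw j) (fun h => hij (hs h))
  have m1 := hsub h1
  have m2 := hsub h2
  have m3 := hsub h3
  simp only [Set.mem_insert_iff, Set.mem_singleton_iff] at m1 m2 m3
  exact three_in_pair m1 m2 m3 d12 d13 d23

lemma abs_add_identity {x c ε : ℝ} (hε : 0 < ε) (hc : ε < |x - c|) :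
    |x + ε - c| + |x - ε - c| = 2 * |x - c| := by
  have hxc : x ≠ c := by
    intro h; rw [h] at hc; simp at hc; linarith
  rcases lt_or_gt_of_ne hxc with h | h
  · have h0 : |x - c| = -(x - c) := abs_of_neg (by linarith)
    rw [h0] at hc
    rw [abs_of_neg (by linarith : x + ε - c < 0), abs_of_neg (by linarith : x - ε - c < 0), h0]
    ring
  · have h0 : |x - c| = x - c := abs_of_pos (by linarith)
    rw [h0] at hc
    rw [abs_of_pos (by linarith : (0:ℝ) < x + ε - c), abs_of_pos (by linarith : (0:ℝ) < x - ε - c), h0]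
    ring
theorem mwvd_aux (n : ℕ) (s : Fin n → ℝ) (hs : Function.Injective s)
    (w : Fin n → ℝ) (hw : ∀ i, 0 < w i) :
    {x : ℝ | ∃ i j : Fin n, i ≠ j ∧ (∀ k, gf s w i x ≤ gf s w k x) ∧
      (∀ k, gf s w j x ≤ gf s w k x)}.Finite ∧
    {x : ℝ | ∃ i j : Fin n, i ≠ j ∧ (∀ k, gf s w i x ≤ gf s w k x) ∧
      (∀ k, gf s w j x ≤ gf s w k x)}.ncard ≤ 2 * n - 2 := by
  classical
  set g := gf s w with hgdef
  set B : Set ℝ := {x | ∃ i j : Fin n, i ≠ j ∧ (∀ k, g i x ≤ g k x) ∧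
    (∀ k, g j x ≤ g k x)} with hB
  have hcont : ∀ k, Continuous (g k) := fun k => gf_cont s w k
  have hnonneg : ∀ k x, 0 ≤ g k x := fun k x => gf_nonneg s w hw k x
  have hBfin : B.Finite := by
    have hsub : B ⊆ ⋃ p : Fin n × Fin n, {x | p.1 ≠ p.2 ∧ g p.1 x = g p.2 x} := by
      rintro x ⟨i, j, hij, hi, hj⟩
      exact Set.mem_iUnion.mpr ⟨(i, j), hij, le_antisymm (hi j) (hj i)⟩
    refine Set.Finite.subset (Set.finite_iUnion ?_) hsub
    intro p
    by_cases h : p.1 = p.2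
    · refine Set.Finite.subset Set.finite_empty ?_
      rintro x ⟨h1, -⟩; exact absurd h h1
    · exact Set.Finite.subset (pair_finite hs hw h) (fun x hx => hx.2)
  refine ⟨hBfin, ?_⟩
  by_cases hBe : B = ∅
  · rw [hBe]; simp
  obtain ⟨x0, hx0⟩ := Set.nonempty_iff_ne_empty.mpr hBe
  have hn2 : 2 ≤ n := by
    obtain ⟨i, j, hij, -, -⟩ := hx0
    have h1 : 1 < Fintype.card (Fin n) := Fintype.one_lt_card_iff.mpr ⟨i, j, hij⟩
    simp at h1; omega
  -- the sorted list of points of B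
  set F := hBfin.toFinset with hF
  set l := F.sort (· ≤ ·) with hldef
  set m := l.length with hmdef
  have hmcard : m = F.card := Finset.length_sort _
  have hFx0 : x0 ∈ F := hBfin.mem_toFinset.mpr hx0
  have hm1 : 1 ≤ m := by
    rw [hmcard]; exact Finset.card_pos.mpr ⟨x0, hFx0⟩
  set b : ℕ → ℝ := fun t => l.getD t 0 with hbdef
  have hbget : ∀ {t : ℕ} (ht : t < m), b t = l[t] := fun ht => List.getD_eq_getElem l 0 ht
  have hsorted : l.Pairwise (· < ·) := (Finset.sortedLT_sort F).pairwise
  have hmono : ∀ {t t' : ℕ}, t < t' → t' < m → b t < b t' := by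
    intro t t' htt ht'
    have ht : t < m := lt_trans htt ht'
    rw [hbget ht, hbget ht']
    exact List.pairwise_iff_get.mp hsorted ⟨t, ht⟩ ⟨t', ht'⟩ htt
  have hmonole : ∀ {t t' : ℕ}, t ≤ t' → t' < m → b t ≤ b t' := by
    intro t t' htt ht'
    rcases eq_or_lt_of_le htt with rfl | h
    · exact le_refl _
    · exact (hmono h ht').le
  have hmemB : ∀ {t : ℕ}, t < m → b t ∈ B := by
    intro t ht
    rw [hbget ht]
    exact hBfin.mem_toFinset.mp ((Finset.mem_sort _).mp (List.getElem_mem ht))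
  have hsurjB : ∀ x ∈ B, ∃ t, t < m ∧ x = b t := by
    intro x hx
    have hxl : x ∈ l := (Finset.mem_sort _).mpr (hBfin.mem_toFinset.mpr hx)
    obtain ⟨t, ht, hteq⟩ := List.mem_iff_getElem.mp hxl
    exact ⟨t, ht, by rw [hbget ht, hteq]⟩
  -- the open intervals between consecutive points of B (truncated at the ends)
  set lo : ℕ → ℝ := fun t => if t = 0 then b 0 - 1 else b (t - 1) with hlo
  set hi : ℕ → ℝ := fun t => if t = m then b (m - 1) + 1 else b t with hhi
  set I : ℕ → Set ℝ := fun t => Set.Ioo (lo t) (hi t) with hI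
  set y : ℕ → ℝ := fun t => (lo t + hi t) / 2 with hy
  have hival : ∀ {t}, t < m → hi t = b t := by
    intro t ht; simp only [hhi]; rw [if_neg (by omega)]
  have hival2 : hi m = b (m - 1) + 1 := by simp only [hhi, if_pos rfl]
  have hloval : ∀ {t}, 0 < t → lo t = b (t - 1) := by
    intro t ht; simp only [hlo]; rw [if_neg (by omega)]
  have hloval0 : lo 0 = b 0 - 1 := by simp only [hlo, if_pos rfl]
  have f1 : ∀ {t}, t ≤ m → lo t < hi t := by
    intro t ht
    by_cases h0 : t = 0
    · subst h0
      rw [hloval0, hival (by omega)]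
      linarith
    · by_cases hmm : t = m
      · subst hmm
        rw [hloval (by omega), hival2]
        linarith
      · rw [hloval (by omega), hival (by omega)]
        exact hmono (by omega) (by omega)
  have f2 : ∀ {t}, t ≤ m → ∀ {x}, x ∈ I t → x ∉ B := by
    intro t ht x hx hxB
    obtain ⟨k, hk, rfl⟩ := hsurjB x hxB
    simp only [hI, Set.mem_Ioo] at hx
    obtain ⟨hx1, hx2⟩ := hx
    by_cases h0 : t = 0
    · subst h0
      rw [hival (by omega)] at hx2
      have : b 0 ≤ b k := hmonole (by omega) hk
      linarith
    · by_cases hmm : t = m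
      · subst hmm
        rw [hloval (by omega)] at hx1
        have : b k ≤ b (m - 1) := hmonole (by omega) (by omega)
        linarith
      · rw [hloval (by omega)] at hx1
        rw [hival (by omega)] at hx2
        rcases le_or_gt k (t - 1) with h | h
        · have : b k ≤ b (t - 1) := hmonole h (by omega)
          linarith
        · have : b t ≤ b k := hmonole (by omega) hk
          linarith
  -- argmin selection
  have hmin : ∀ x : ℝ, ∃ i : Fin n, ∀ k, g i x ≤ g k x := by
    intro x
    obtain ⟨i, -, hi⟩ := Finset.exists_min_image Finset.univ (fun k => g k x)
      ⟨⟨0, by omega⟩, Finset.mem_univ _⟩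
    exact ⟨i, fun k => hi k (Finset.mem_univ k)⟩
  choose σ hσ using fun t : ℕ => hmin (y t)
  have hstrict : ∀ {x : ℝ}, x ∉ B → ∀ {i : Fin n}, (∀ k, g i x ≤ g k x) →
      ∀ k, k ≠ i → g i x < g k x := by
    intro x hxB i hi k hk
    rcases lt_or_eq_of_le (hi k) with h | h
    · exact h
    · exact absurd (⟨i, k, Ne.symm hk, hi, fun j => by rw [← h]; exact hi j⟩ :
        x ∈ B) hxB
  have hUopen : ∀ i : Fin n, IsOpen {x : ℝ | ∀ k, k ≠ i → g i x < g k x} := by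
    intro i
    have he : {x : ℝ | ∀ k, k ≠ i → g i x < g k x} =
        ⋂ k : Fin n, {x | k ≠ i → g i x < g k x} := by
      ext x; simp [Set.mem_iInter]
    rw [he]
    refine isOpen_iInter_of_finite fun k => ?_
    by_cases hk : k = i
    · have h2 : {x : ℝ | k ≠ i → g i x < g k x} = Set.univ := by
        ext x; simp [hk]
      rw [h2]; exact isOpen_univ
    · have h2 : {x : ℝ | k ≠ i → g i x < g k x} = {x | g i x < g k x} := by
        ext x; simp [hk]
      rw [h2]; exact isOpen_lt (hcont i) (hcont k)
  have hymem : ∀ {t}, t ≤ m → y t ∈ I t := by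
    intro t ht
    have := f1 ht
    simp only [hI, hy, Set.mem_Ioo]
    constructor <;> linarith
  -- σ t is the unique strict minimizer on all of I t
  have hP1 : ∀ {t}, t ≤ m → ∀ {x}, x ∈ I t → ∀ k, k ≠ σ t → g (σ t) x < g k x := by
    intro t ht
    have hIU : I t ⊆ {x : ℝ | ∀ k, k ≠ σ t → g (σ t) x < g k x} := by
      have hVopen : IsOpen (⋃ j ∈ {j : Fin n | j ≠ σ t},
          {x : ℝ | ∀ k, k ≠ j → g j x < g k x}) :=
        isOpen_biUnion fun j _ => hUopen j
      have hdisj : Disjoint {x : ℝ | ∀ k, k ≠ σ t → g (σ t) x < g k x}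
          (⋃ j ∈ {j : Fin n | j ≠ σ t}, {x : ℝ | ∀ k, k ≠ j → g j x < g k x}) := by
        rw [Set.disjoint_left]
        intro x hxU hxV
        simp only [Set.mem_iUnion, Set.mem_setOf_eq] at hxV
        obtain ⟨j, hj, hxj⟩ := hxV
        have h1 := hxU j hj
        have h2 := hxj (σ t) (Ne.symm hj)
        linarith
      have hsub : I t ⊆ {x : ℝ | ∀ k, k ≠ σ t → g (σ t) x < g k x} ∪
          (⋃ j ∈ {j : Fin n | j ≠ σ t}, {x : ℝ | ∀ k, k ≠ j → g j x < g k x}) := by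
        intro x hx
        obtain ⟨i', hi'⟩ := hmin x
        have hxB := f2 ht hx
        have hstr : ∀ k, k ≠ i' → g i' x < g k x := fun k hk => hstrict hxB hi' k hk
        by_cases hii : i' = σ t
        · subst hii
          exact Or.inl hstr
        · refine Or.inr ?_
          simp only [Set.mem_iUnion, Set.mem_setOf_eq]
          exact ⟨i', hii, hstr⟩
      have hne : (I t ∩ {x : ℝ | ∀ k, k ≠ σ t → g (σ t) x < g k x}).Nonempty := by
        refine ⟨y t, hymem ht, ?_⟩
        intro k hk
        exact hstrict (f2 ht (hymem ht)) (hσ t) k hk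
      have hIpre : IsPreconnected (I t) := by rw [hI]; exact isPreconnected_Ioo
      exact IsPreconnected.subset_left_of_subset_union (hUopen (σ t)) hVopen hdisj hsub hne hIpre
    intro x hx k hk
    exact hIU hx k hk
  -- σ t minimizes on the closure of I t
  have hP2 : ∀ {t}, t ≤ m → ∀ {x}, x ∈ closure (I t) → ∀ k, g (σ t) x ≤ g k x := by
    intro t ht x hx k
    have hclosed : IsClosed {z : ℝ | g (σ t) z ≤ g k z} := isClosed_le (hcont _) (hcont _)
    have hsub : I t ⊆ {z : ℝ | g (σ t) z ≤ g k z} := by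
      intro z hz
      by_cases hk2 : k = σ t
      · rw [hk2]; exact le_refl (g (σ t) z)
      · exact (hP1 ht hz k hk2).le
    exact closure_minimal hsub hclosed hx
  have hclosI : ∀ {t}, t ≤ m → closure (I t) = Set.Icc (lo t) (hi t) := by
    intro t ht; rw [hI]; exact closure_Ioo (ne_of_lt (f1 ht))
  have hmemcl : ∀ {k}, k < m → b k ∈ closure (I k) ∧ b k ∈ closure (I (k + 1)) := by
    intro k hk
    have hlov : lo (k + 1) = b k := by rw [hloval (by omega)]; simp
    constructor
    · rw [hclosI (le_of_lt hk)]
      have h1 := f1 (le_of_lt hk)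
      rw [hival hk] at h1
      exact ⟨h1.le, by rw [hival hk]⟩
    · rw [hclosI (show k + 1 ≤ m by omega)]
      have h1 := f1 (show k + 1 ≤ m by omega)
      rw [hlov] at h1
      exact ⟨by rw [hlov], h1.le⟩
  -- adjacent interval sites differ
  have hP3 : ∀ k, k < m → σ k ≠ σ (k + 1) := by
    intro k hk heq
    have hxB : b k ∈ B := hmemB hk
    have himin : ∀ j, g (σ (k + 1)) (b k) ≤ g j (b k) :=
      hP2 (show k + 1 ≤ m by omega) (hmemcl hk).2
    obtain ⟨i0, j0, hij0, hi0, hj0⟩ := hxB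
    obtain ⟨j, hjne, hjmin⟩ : ∃ j, j ≠ σ (k + 1) ∧ ∀ k', g j (b k) ≤ g k' (b k) := by
      by_cases h : i0 = σ (k + 1)
      · exact ⟨j0, by rw [← h]; exact hij0.symm, hj0⟩
      · exact ⟨i0, h, hi0⟩
    have heqv : g (σ (k + 1)) (b k) = g j (b k) := le_antisymm (himin j) (hjmin (σ (k + 1)))
    have hpos : 0 < g (σ (k + 1)) (b k) := by
      rcases lt_or_eq_of_le (hnonneg (σ (k + 1)) (b k)) with h | h
      · exact h
      · exfalso
        have hz1 : b k = s (σ (k + 1)) := by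
          have h' : |b k - s (σ (k + 1))| / w (σ (k + 1)) = 0 := by
            simp only [hgdef, gf] at h; exact h.symm
          rcases div_eq_zero_iff.mp h' with h'' | h''
          · have := abs_eq_zero.mp h''; linarith [this]
          · exact absurd h'' (ne_of_gt (hw _))
        have hz2 : b k = s j := by
          have h' : |b k - s j| / w j = 0 := by
            simp only [hgdef, gf] at heqv h
            rw [← heqv]; exact h.symm
          rcases div_eq_zero_iff.mp h' with h'' | h''
          · have := abs_eq_zero.mp h''; linarith [this]
          · exact absurd h'' (ne_of_gt (hw _))
        exact hjne (hs (hz2.symm.trans hz1))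
    have hposj : 0 < g j (b k) := heqv ▸ hpos
    have hA1 : 0 < |b k - s (σ (k + 1))| := by
      have h' := hpos
      simp only [hgdef, gf] at h'
      by_contra hcon
      push_neg at hcon
      have : |b k - s (σ (k + 1))| = 0 := le_antisymm hcon (abs_nonneg _)
      rw [this] at h'; simp at h'
    have hA2 : 0 < |b k - s j| := by
      have h' := hposj
      simp only [hgdef, gf] at h'
      by_contra hcon
      push_neg at hcon
      have : |b k - s j| = 0 := le_antisymm hcon (abs_nonneg _)
      rw [this] at h'; simp at h'
    have hgap1 : lo k < b k := by
      have := f1 (le_of_lt hk); rw [hival hk] at this; exact this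
    have hlov : lo (k + 1) = b k := by rw [hloval (by omega)]; simp
    have hgap2 : b k < hi (k + 1) := by
      have := f1 (show k + 1 ≤ m by omega); rw [hlov] at this; exact this
    set ε := min (min |b k - s (σ (k + 1))| |b k - s j|)
      (min (b k - lo k) (hi (k + 1) - b k)) / 2 with hε
    have hM : 0 < min (min |b k - s (σ (k + 1))| |b k - s j|)
        (min (b k - lo k) (hi (k + 1) - b k)) :=
      lt_min (lt_min hA1 hA2) (lt_min (by linarith) (by linarith))
    have hεpos : 0 < ε := by rw [hε]; linarith
    have hεM : ε < min (min |b k - s (σ (k + 1))| |b k - s j|)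
        (min (b k - lo k) (hi (k + 1) - b k)) := by
      rw [hε]; linarith
    have hε1 : ε < |b k - s (σ (k + 1))| :=
      lt_of_lt_of_le hεM (le_trans (min_le_left _ _) (min_le_left _ _))
    have hε2 : ε < |b k - s j| :=
      lt_of_lt_of_le hεM (le_trans (min_le_left _ _) (min_le_right _ _))
    have hε3 : ε < b k - lo k :=
      lt_of_lt_of_le hεM (le_trans (min_le_right _ _) (min_le_left _ _))
    have hε4 : ε < hi (k + 1) - b k :=
      lt_of_lt_of_le hεM (le_trans (min_le_right _ _) (min_le_right _ _))
    have hxl : b k - ε ∈ I k := by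
      simp only [hI, Set.mem_Ioo]
      constructor
      · linarith
      · rw [hival hk]; linarith
    have hxr : b k + ε ∈ I (k + 1) := by
      simp only [hI, Set.mem_Ioo]
      constructor
      · rw [hlov]; linarith
      · linarith
    have idi : g (σ (k + 1)) (b k + ε) + g (σ (k + 1)) (b k - ε) =
        2 * g (σ (k + 1)) (b k) := by
      simp only [hgdef, gf]
      rw [← add_div, abs_add_identity hεpos hε1]
      ring
    have idj : g j (b k + ε) + g j (b k - ε) = 2 * g j (b k) := by
      simp only [hgdef, gf]
      rw [← add_div, abs_add_identity hεpos hε2]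
      ring
    have hσk : σ k = σ (k + 1) := heq
    have hL : g (σ (k + 1)) (b k - ε) < g j (b k - ε) := by
      have hj' : j ≠ σ k := by rw [hσk]; exact hjne
      have := hP1 (le_of_lt hk) hxl j hj'
      rwa [hσk] at this
    have hR : g (σ (k + 1)) (b k + ε) < g j (b k + ε) :=
      hP1 (show k + 1 ≤ m by omega) hxr j hjne
    linarith
  -- samples are increasing
  have hys : ∀ {t t'}, t < t' → t' ≤ m → y t < y t' := by
    intro t t' h1 h2
    have ha : y t < hi t := by
      have := f1 (by omega : t ≤ m); simp only [hy]; linarith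
    have hb2 : lo t' < y t' := by
      have := f1 h2; simp only [hy]; linarith
    have hc : hi t ≤ lo t' := by
      rw [hival (by omega), hloval (by omega)]
      exact hmonole (by omega) (by omega)
    linarith
  -- no abab alternation among interval sites
  have hP4 : ∀ t1 t2 t3 t4 : ℕ, t1 < t2 → t2 < t3 → t3 < t4 → t4 ≤ m →
      σ t1 = σ t3 → σ t2 = σ t4 → σ t1 ≠ σ t2 → False := by
    intro t1 t2 t3 t4 h12 h23 h34 h4m e13 e24 hne
    have hcij : Continuous (fun x => g (σ t1) x - g (σ t2) x) :=
      (hcont _).sub (hcont _)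
    have hv1 : g (σ t1) (y t1) - g (σ t2) (y t1) < 0 := by
      have := hP1 (by omega : t1 ≤ m) (hymem (by omega)) (σ t2) (Ne.symm hne)
      linarith
    have hv2 : 0 < g (σ t1) (y t2) - g (σ t2) (y t2) := by
      have := hP1 (by omega : t2 ≤ m) (hymem (by omega)) (σ t1) hne
      linarith
    have hv3 : g (σ t1) (y t3) - g (σ t2) (y t3) < 0 := by
      have := hP1 (by omega : t3 ≤ m) (hymem (by omega)) (σ t2)
        (by rw [← e13]; exact Ne.symm hne)
      rw [← e13] at this
      linarith
    have hv4 : 0 < g (σ t1) (y t4) - g (σ t2) (y t4) := by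
      have := hP1 h4m (hymem h4m) (σ t1) (by rw [← e24]; exact hne)
      rw [← e24] at this
      linarith
    obtain ⟨z1, hz1m, hz1⟩ := intermediate_value_Ioo (le_of_lt (hys h12 (by omega)))
      hcij.continuousOn (Set.mem_Ioo.mpr ⟨hv1, hv2⟩)
    obtain ⟨z2, hz2m, hz2⟩ := intermediate_value_Ioo' (le_of_lt (hys h23 (by omega)))
      hcij.continuousOn (Set.mem_Ioo.mpr ⟨hv3, hv2⟩)
    obtain ⟨z3, hz3m, hz3⟩ := intermediate_value_Ioo (le_of_lt (hys h34 h4m))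
      hcij.continuousOn (Set.mem_Ioo.mpr ⟨hv3, hv4⟩)
    have d12 : z1 ≠ z2 := ne_of_lt (lt_trans hz1m.2 hz2m.1)
    have d23 : z2 ≠ z3 := ne_of_lt (lt_trans hz2m.2 hz3m.1)
    have d13 : z1 ≠ z3 := ne_of_lt (lt_trans hz1m.2 (lt_trans hz2m.1 (lt_trans hz2m.2 hz3m.1)))
    exact pair_no_three hs hw hne (sub_eq_zero.mp hz1) (sub_eq_zero.mp hz2)
      (sub_eq_zero.mp hz3) d12 d13 d23
  -- assemble the Davenport–Schinzel sequence
  set L : List (Fin n) := (List.range (m + 1)).map σ with hLdef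
  have hchainL : L.Chain' (· ≠ ·) := by
    show List.IsChain _ _; rw [hLdef, List.isChain_map]
    exact (List.isChain_range_succ (fun a b => σ a ≠ σ b) m).mpr (fun k hk => hP3 k hk)
  have hababL : ∀ a c : Fin n, a ≠ c → ¬ ([a, c, a, c] <+ L) := by
    intro a c hac hsub
    rw [hLdef] at hsub
    obtain ⟨l', hl'sub, hl'eq⟩ := List.sublist_map_iff.mp hsub
    have hplt : l'.Pairwise (· < ·) := List.Pairwise.sublist hl'sub List.pairwise_lt_range
    have hlen4 : l'.length = 4 := by
      have := congrArg List.length hl'eq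
      simpa using this.symm
    obtain ⟨t1, t2, t3, t4, rfl⟩ : ∃ t1 t2 t3 t4, l' = [t1, t2, t3, t4] := by
      rcases l' with _ | ⟨t1, _ | ⟨t2, _ | ⟨t3, _ | ⟨t4, _ | ⟨t5, rest⟩⟩⟩⟩⟩ <;>
        simp only [List.length_nil, List.length_cons] at hlen4 <;> try omega
      exact ⟨t1, t2, t3, t4, rfl⟩
    simp only [List.map_cons, List.map_nil, List.cons.injEq, and_true] at hl'eq
    obtain ⟨ha1, hc2, ha3, hc4⟩ := hl'eq
    have hb4 : t4 < m + 1 := by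
      have ht4 : t4 ∈ List.range (m + 1) := hl'sub.subset (by simp)
      exact List.mem_range.mp ht4
    have p12 : t1 < t2 := (List.pairwise_cons.mp hplt).1 t2 (by simp)
    have p23 : t2 < t3 :=
      (List.pairwise_cons.mp (List.pairwise_cons.mp hplt).2).1 t3 (by simp)
    have p34 : t3 < t4 :=
      (List.pairwise_cons.mp (List.pairwise_cons.mp (List.pairwise_cons.mp hplt).2).2).1 t4
        (by simp)
    exact hP4 t1 t2 t3 t4 p12 p23 p34 (by omega) (by rw [← ha1, ← ha3])
      (by rw [← hc2, ← hc4]) (by rw [← ha1, ← hc2]; exact hac)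
  have hlenL : L.length = m + 1 := by rw [hLdef]; simp
  have hbound := ds2 (m + 1) L Finset.univ (le_of_eq hlenL)
    (fun x _ => Finset.mem_univ x) hchainL hababL
  rw [hlenL] at hbound
  have hcu : (Finset.univ : Finset (Fin n)).card = n := by simp
  rw [hcu] at hbound
  have hncard : B.ncard = m :=
    (Set.ncard_eq_toFinset_card B hBfin).trans hmcard.symm
  omega

/-- Linear complexity of the 1D multiplicatively weighted Voronoi diagram:
the set of points that lie in at least two weighted Voronoi regions
(minimum achieved by two distinct sites) has at most `2n - 2` elements. -/
theorem one_dim_mwvd_linear_complexity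
    (n : ℕ) (s : Fin n → ℝ) (hs : Function.Injective s)
    (w : Fin n → ℝ) (hw : ∀ i, 0 < w i) :
    let B := {x : ℝ | ∃ i j : Fin n, i ≠ j ∧
      (∀ k, |x - s i| / w i ≤ |x - s k| / w k) ∧
      (∀ k, |x - s j| / w j ≤ |x - s k| / w k)}
    B.Finite ∧ B.ncard ≤ 2 * n - 2 := by
  intro B
  have h := mwvd_aux n s hs w hw
  simp only [gf] at h
  exact h
end

section
/- Let s_i, s_j ∈ ℝ² be distinct with weights 0 < w_i < w_j, and let t range over the open interval (t_min, t_max) = (d/(w_i+w_j), d/(w_j−w_i)) with d = dist(s_i,s_j). Then the two intersection points of the offset circles at time t both converge, as t → t_min⁺, to the point on segment [s_i,s_j] dividing it in ratio w_i : w_j from s_i, and as t → t_max⁻, to the point on the line through s_i and s_j outside the segment dividing it externally in ratio w_i : w_j. These two limit points are exactly the intersections of the Apollonius bisector circle with the line through s_i and s_j. -/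
/-!
Both division points lie on the line through the sites, so Stewart's relation
`|q - lineMap x y l|² = (1 - l)|q - x|² + l|q - y|² - l(1 - l)|x - y|²` computes the distance
from a point of both offset circles to them exactly: its square is `w_i w_j (t² - t_min²)` for
the internal point and `w_i w_j (t_max² - t²)` for the external one, and these vanish at the ends
of the time interval. On the line, the bisector condition `|r| / w_i = |1 - r| / w_j` for the
parameter `r` has exactly the two solutions `w_i / (w_i ± w_j)`.
-/

open Filter Topology AffineMap

section Module

variable {V : Type*} [AddCommGroup V] [Module ℝ V]

theorem lineMap_div_add_eq {a b : ℝ} (h : a + b ≠ 0) (x y : V) :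
    lineMap x y (a / (a + b)) = (a + b)⁻¹ • (b • x + a • y) := by
  rw [lineMap_apply_module]
  match_scalars <;> field

theorem lineMap_div_sub_eq {a b : ℝ} (h : a ≠ b) (x y : V) :
    lineMap x y (a / (a - b)) = (b - a)⁻¹ • (b • x - a • y) := by
  have : a - b ≠ 0 := sub_ne_zero.mpr h
  rw [lineMap_apply_module]
  match_scalars <;> field

end Module

section InnerProductSpace

variable {V : Type*} [NormedAddCommGroup V] [InnerProductSpace ℝ V]

theorem norm_sub_smul_sq (u v : V) (l : ℝ) :
    ‖u - l • v‖ ^ 2 = (1 - l) * ‖u‖ ^ 2 + l * ‖u - v‖ ^ 2 - l * (1 - l) * ‖v‖ ^ 2 := by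
  have h₁ := norm_sub_sq_real u (l • v)
  have h₂ := norm_sub_sq_real u v
  rw [real_inner_smul_right, norm_smul, Real.norm_eq_abs, mul_pow, sq_abs] at h₁
  linear_combination h₁ - l * h₂

theorem dist_lineMap_sq (q x y : V) (l : ℝ) :
    dist q (lineMap x y l) ^ 2
      = (1 - l) * dist q x ^ 2 + l * dist q y ^ 2 - l * (1 - l) * dist x y ^ 2 := by
  have hq : q - lineMap x y l = (q - x) - l • (y - x) := by
    rw [lineMap_apply_module]; module
  have hy : (q - x) - (y - x) = q - y := by abel
  rw [dist_eq_norm, hq, norm_sub_smul_sq, hy, ← dist_eq_norm, ← dist_eq_norm, ← dist_eq_norm,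
    dist_comm y x]

variable {q x y : V} {a b t : ℝ}

theorem dist_lineMap_div_add_sq (hab : a + b ≠ 0) (hx : dist q x = t * a)
    (hy : dist q y = t * b) :
    dist q (lineMap x y (a / (a + b))) ^ 2 = a * b * (t ^ 2 - (dist x y / (a + b)) ^ 2) := by
  rw [dist_lineMap_sq, hx, hy]
  field_simp
  ring

theorem dist_lineMap_div_sub_sq (hab : a ≠ b) (hx : dist q x = t * a)
    (hy : dist q y = t * b) :
    dist q (lineMap x y (a / (a - b))) ^ 2 = a * b * ((dist x y / (b - a)) ^ 2 - t ^ 2) := by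
  have : a - b ≠ 0 := sub_ne_zero.mpr hab
  rw [dist_lineMap_sq, hx, hy]
  field_simp
  ring

end InnerProductSpace

section Apollonius

variable {V P : Type*} [NormedAddCommGroup V] [NormedSpace ℝ V] [MetricSpace P]
  [NormedAddTorsor V P] {x y : P} {a b : ℝ}

theorem dist_lineMap_div_eq_div_iff (hxy : x ≠ y) (ha : 0 < a) (hb : 0 < b) (hab : a ≠ b)
    (r : ℝ) :
    dist (lineMap x y r) x / a = dist (lineMap x y r) y / b ↔
      r = a / (a + b) ∨ r = a / (a - b) := by
  have hd : 0 < dist x y := dist_pos.mpr hxy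
  have : a - b ≠ 0 := sub_ne_zero.mpr hab
  rw [dist_lineMap_left, dist_lineMap_right, Real.norm_eq_abs, Real.norm_eq_abs,
    div_eq_div_iff ha.ne' hb.ne', mul_right_comm, mul_right_comm |1 - r|,
    mul_left_inj' hd.ne']
  conv_lhs => rw [← abs_of_pos ha, ← abs_of_pos hb, ← abs_mul, ← abs_mul, abs_eq_abs]
  refine or_congr ?_ ?_ <;> constructor <;> intro h
  · field_simp; linarith
  · subst h; field_simp; ring
  · field_simp; linarith
  · subst h; field_simp; ring

theorem apollonius_inter_line (hxy : x ≠ y) (ha : 0 < a) (hb : 0 < b) (hab : a ≠ b) :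
    {q | dist q x / a = dist q y / b} ∩ {q | ∃ r : ℝ, q = lineMap x y r} =
      {lineMap x y (a / (a + b)), lineMap x y (a / (a - b))} := by
  ext q
  simp only [Set.mem_inter_iff, Set.mem_ofPred_eq, Set.mem_insert_iff, Set.mem_singleton_iff]
  constructor
  · rintro ⟨h, r, rfl⟩
    rcases (dist_lineMap_div_eq_div_iff hxy ha hb hab r).mp h with rfl | rfl
    exacts [Or.inl rfl, Or.inr rfl]
  · rintro (rfl | rfl)
    · exact ⟨(dist_lineMap_div_eq_div_iff hxy ha hb hab _).mpr (Or.inl rfl), _, rfl⟩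
    · exact ⟨(dist_lineMap_div_eq_div_iff hxy ha hb hab _).mpr (Or.inr rfl), _, rfl⟩

end Apollonius

theorem tendsto_of_dist_sq_eq {α β : Type*} [PseudoMetricSpace α] {f : β → α} {c : α}
    {g : β → ℝ} {l : Filter β} (hg : Tendsto g l (𝓝 0))
    (hfg : ∀ᶠ t in l, dist (f t) c ^ 2 = g t) : Tendsto f l (𝓝 c) := by
  rw [tendsto_iff_dist_tendsto_zero]
  have hsqrt : Tendsto (fun t => √(g t)) l (𝓝 0) := by simpa using hg.sqrt
  refine hsqrt.congr' ?_
  filter_upwards [hfg] with t ht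
  rw [← ht, Real.sqrt_sq dist_nonneg]

/-- Any selection of intersection points of the two growing offset circles
converges to the internal division point as `t` tends to the collision time
and to the external division point as `t` tends to the domination time; these
two points are exactly the intersections of the Apollonius bisector circle
with the line through the two sites. -/
theorem offset_intersections_limits
    (s_i s_j : EuclideanSpace ℝ (Fin 2)) (w_i w_j : ℝ)
    (hwi : 0 < w_i) (hij : w_i < w_j) (hs : s_i ≠ s_j)
    (p : ℝ → EuclideanSpace ℝ (Fin 2))
    (hp : ∀ t ∈ Set.Ioo (dist s_i s_j / (w_i + w_j)) (dist s_i s_j / (w_j - w_i)),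
      p t ∈ Metric.sphere s_i (t * w_i) ∩ Metric.sphere s_j (t * w_j)) :
    Filter.Tendsto p
      (nhdsWithin (dist s_i s_j / (w_i + w_j))
        (Set.Ioo (dist s_i s_j / (w_i + w_j)) (dist s_i s_j / (w_j - w_i))))
      (nhds ((w_i + w_j)⁻¹ • (w_j • s_i + w_i • s_j))) ∧
    Filter.Tendsto p
      (nhdsWithin (dist s_i s_j / (w_j - w_i))
        (Set.Ioo (dist s_i s_j / (w_i + w_j)) (dist s_i s_j / (w_j - w_i))))
      (nhds ((w_j - w_i)⁻¹ • (w_j • s_i - w_i • s_j))) ∧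
    {q : EuclideanSpace ℝ (Fin 2) | dist q s_i / w_i = dist q s_j / w_j} ∩
        {q | ∃ r : ℝ, q = AffineMap.lineMap s_i s_j r} =
      {(w_i + w_j)⁻¹ • (w_j • s_i + w_i • s_j),
       (w_j - w_i)⁻¹ • (w_j • s_i - w_i • s_j)} := by
  have hsum : w_i + w_j ≠ 0 := by linarith
  have hne : w_i ≠ w_j := hij.ne
  set d := dist s_i s_j
  rw [← lineMap_div_add_eq hsum, ← lineMap_div_sub_eq hne]
  refine ⟨?_, ?_, apollonius_inter_line hs hwi (hwi.trans hij) hne⟩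
  · refine tendsto_of_dist_sq_eq (g := fun t => w_i * w_j * (t ^ 2 - (d / (w_i + w_j)) ^ 2))
      ?_ (eventually_nhdsWithin_of_forall fun t ht =>
        dist_lineMap_div_add_sq hsum (hp t ht).1 (hp t ht).2)
    exact ((by fun_prop : Continuous _).tendsto' _ _ (by ring)).mono_left nhdsWithin_le_nhds
  · refine tendsto_of_dist_sq_eq (g := fun t => w_i * w_j * ((d / (w_j - w_i)) ^ 2 - t ^ 2))
      ?_ (eventually_nhdsWithin_of_forall fun t ht =>
        dist_lineMap_div_sub_sq hne (hp t ht).1 (hp t ht).2)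
    exact ((by fun_prop : Continuous _).tendsto' _ _ (by ring)).mono_left nhdsWithin_le_nhds
end
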